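/- arXiv:1003.3181 — 3 statements merged into one kernel-verified Lean document; each statement's English description precedes it below -/
import Mathlib

section
/- (Pólya's Theorem) If a real form f(x₁,…,x_m) of degree d is strictly positive on the standard simplex {x : Σ x_i = 1, x_i ≥ 0}, then there exists N ∈ ℕ such that every coefficient of the form (x₁ + … + x_m)^N · f(x₁,…,x_m) is strictly positive. -/
open MvPolynomial Finset

lemma polya_descFactorial_cast (a b : ℕ) :
    ((a.descFactorial b : ℕ) : ℝ) = ∏ j ∈ range b, ((a:ℝ) - j) := by
  induction b with
  | zero => simp
  | succ b ih =>
    rw [Nat.descFactorial_succ, prod_range_succ, ← ih]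
    rcases le_or_gt b a with h | h
    · push_cast [h]; ring
    · have h0 : a.descFactorial b = 0 := Nat.descFactorial_eq_zero_iff_lt.2 h
      simp [h0]

lemma polya_abs_prod_sub_prod {ι : Type*} [DecidableEq ι] (s : Finset ι) (u v : ι → ℝ)
    (hu : ∀ i ∈ s, |u i| ≤ 1) (hv : ∀ i ∈ s, |v i| ≤ 1) :
    |∏ i ∈ s, u i - ∏ i ∈ s, v i| ≤ ∑ i ∈ s, |u i - v i| := by
  induction s using Finset.induction with
  | empty => simp
  | @insert a s ha ih =>
    rw [prod_insert ha, prod_insert ha, sum_insert ha]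
    have h1 : |u a * ∏ i ∈ s, u i - v a * ∏ i ∈ s, v i|
        ≤ |u a| * |∏ i ∈ s, u i - ∏ i ∈ s, v i| + |∏ i ∈ s, v i| * |u a - v a| := by
      calc |u a * ∏ i ∈ s, u i - v a * ∏ i ∈ s, v i|
          = |u a * (∏ i ∈ s, u i - ∏ i ∈ s, v i) + (∏ i ∈ s, v i) * (u a - v a)| := by ring_nf
        _ ≤ _ := by
            refine (abs_add_le _ _).trans ?_
            rw [abs_mul, abs_mul]
    have hva : |∏ i ∈ s, v i| ≤ 1 := by
      rw [abs_prod]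
      exact Finset.prod_le_one (fun i hi => abs_nonneg _) (fun i hi => hv i (mem_insert_of_mem hi))
    have hih := ih (fun i hi => hu i (mem_insert_of_mem hi)) (fun i hi => hv i (mem_insert_of_mem hi))
    have h2 : |u a| * |∏ i ∈ s, u i - ∏ i ∈ s, v i| ≤ 1 * (∑ i ∈ s, |u i - v i|) :=
      mul_le_mul (hu a (mem_insert_self a s)) hih (abs_nonneg _) zero_le_one
    have h3 : |∏ i ∈ s, v i| * |u a - v a| ≤ 1 * |u a - v a| :=
      mul_le_mul_of_nonneg_right hva (abs_nonneg _)
    nlinarith [abs_nonneg (u a - v a)]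

lemma polya_prodX (m : ℕ) (γ : Fin m →₀ ℕ) :
    (∏ i, X i ^ γ i : MvPolynomial (Fin m) ℝ) = monomial γ 1 := by
  rw [← prod_X_pow_eq_monomial]
  exact (Finset.prod_subset (subset_univ _) (by intro i _ hi; simp at hi; simp [hi])).symm

lemma polya_coeffPow (m N : ℕ) (γ : Fin m →₀ ℕ) :
    MvPolynomial.coeff γ ((∑ i, X i : MvPolynomial (Fin m) ℝ)^N)
      = if (∑ i, γ i) = N then (Nat.multinomial univ ⇑γ : ℝ) else 0 := by
  rw [Finset.sum_pow_eq_sum_piAntidiag, MvPolynomial.coeff_sum]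
  have key : ∀ k : Fin m → ℕ, MvPolynomial.coeff γ
      ((Nat.multinomial univ k : MvPolynomial (Fin m) ℝ) * ∏ i, X i ^ k i)
      = if k = ⇑γ then (Nat.multinomial univ k : ℝ) else 0 := by
    intro k
    have : (∏ i, X i ^ k i : MvPolynomial (Fin m) ℝ)
        = monomial (Finsupp.equivFunOnFinite.symm k) 1 := by
      rw [← polya_prodX m (Finsupp.equivFunOnFinite.symm k)]
      simp [Finsupp.equivFunOnFinite]; rfl
    rw [this, ← C_eq_coe_nat, coeff_C_mul, coeff_monomial]
    by_cases h : Finsupp.equivFunOnFinite.symm k = γ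
    · have : k = ⇑γ := by rw [← h]; simp [Finsupp.equivFunOnFinite]; rfl
      simp [h, this]
    · have : ¬ (k = ⇑γ) := by
        intro hk; exact h (by ext i; simp [Finsupp.equivFunOnFinite, hk])
      simp [h, this]
  simp_rw [key]
  by_cases h : (∑ i, γ i) = N
  · rw [Finset.sum_eq_single (⇑γ)]
    · simp [h]
    · intro k _ hk; simp [hk]
    · intro hmem
      exact absurd (by simp [mem_piAntidiag, h]) hmem
  · rw [if_neg h]
    apply Finset.sum_eq_zero
    intro k hk
    rw [mem_piAntidiag] at hk
    have : ¬ (k = ⇑γ) := by rintro rfl; exact h hk.1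
    simp [this]

lemma polya_degsum {m d : ℕ} {f : MvPolynomial (Fin m) ℝ} (hf : f.IsHomogeneous d)
    {β : Fin m →₀ ℕ} (hβ : β ∈ f.support) : ∑ i, β i = d := by
  have h := hf (mem_support_iff.1 hβ)
  change Finsupp.weight (fun _ => 1) β = d at h; rw [← Finsupp.degree_eq_weight_one] at h
  rw [← h, Finsupp.degree_apply]
  exact (Finset.sum_subset (subset_univ _)
    (fun i _ hi => Finsupp.notMem_support_iff.1 hi)).symm

lemma polya_natident (m N d : ℕ) (α β : Fin m →₀ ℕ) (hle : β ≤ α)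
    (hα : ∑ i, α i = N + d) (hβ : ∑ i, β i = d) :
    Nat.multinomial univ ⇑(α - β) * ∏ i, Nat.factorial (α i)
      = Nat.factorial N * ∏ i, (α i).descFactorial (β i) := by
  have hle' : ∀ i, β i ≤ α i := fun i => Finsupp.le_def.1 hle i
  have hsub : ∀ i, (α - β) i = α i - β i := fun i => Finsupp.tsub_apply α β i
  have hsum : ∑ i, (α - β) i = N := by
    simp_rw [hsub]
    have : ∑ i, (α i - β i) + ∑ i, β i = ∑ i, α i := by
      rw [← Finset.sum_add_distrib]
      exact Finset.sum_congr rfl fun i _ => Nat.sub_add_cancel (hle' i)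
    omega
  have hfac : ∏ i, Nat.factorial (α i)
      = (∏ i, Nat.factorial ((α - β) i)) * ∏ i, (α i).descFactorial (β i) := by
    rw [← Finset.prod_mul_distrib]
    refine Finset.prod_congr rfl fun i _ => ?_
    rw [hsub i, Nat.factorial_mul_descFactorial (hle' i)]
  rw [hfac, ← Nat.mul_assoc, Nat.mul_comm (Nat.multinomial _ _), Nat.multinomial_spec, hsum]

lemma polya_keyident (m N d : ℕ) (f : MvPolynomial (Fin m) ℝ) (hf : f.IsHomogeneous d)
    (α : Fin m →₀ ℕ) (hα : ∑ i, α i = N + d) :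
    MvPolynomial.coeff α ((∑ i, X i : MvPolynomial (Fin m) ℝ)^N * f)
        * ∏ i, ((Nat.factorial (α i)) : ℝ)
      = (Nat.factorial N : ℝ) * ∑ β ∈ f.support, MvPolynomial.coeff β f
          * ∏ i, ((α i).descFactorial (β i) : ℝ) := by
  conv_lhs => rw [f.as_sum, Finset.mul_sum, coeff_sum]
  rw [Finset.sum_mul, Finset.mul_sum]
  refine Finset.sum_congr rfl fun β hβ => ?_
  have hdeg : ∑ i, β i = d := polya_degsum hf hβ
  rw [coeff_mul_monomial']
  by_cases hle : β ≤ α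
  · rw [if_pos hle, polya_coeffPow]
    have hsum : ∑ i, (α - β) i = N := by
      have hle' : ∀ i, β i ≤ α i := fun i => Finsupp.le_def.1 hle i
      simp_rw [Finsupp.tsub_apply]
      have : ∑ i, (α i - β i) + ∑ i, β i = ∑ i, α i := by
        rw [← Finset.sum_add_distrib]
        exact Finset.sum_congr rfl fun i _ => Nat.sub_add_cancel (hle' i)
      omega
    rw [if_pos hsum]
    have h1 := polya_natident m N d α β hle hα hdeg
    have h2 : (Nat.multinomial univ ⇑(α - β) : ℝ) * ∏ i, ((Nat.factorial (α i)) : ℝ)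
        = (Nat.factorial N : ℝ) * ∏ i, ((α i).descFactorial (β i) : ℝ) := by
      exact_mod_cast congrArg (Nat.cast : ℕ → ℝ) h1
    calc (Nat.multinomial univ ⇑(α - β) : ℝ) * coeff β f * ∏ i, ((Nat.factorial (α i)) : ℝ)
        = coeff β f * ((Nat.multinomial univ ⇑(α - β) : ℝ)
            * ∏ i, ((Nat.factorial (α i)) : ℝ)) := by ring
      _ = _ := by rw [h2]; ring
  · rw [if_neg hle, zero_mul]
    obtain ⟨i, hi⟩ : ∃ i, α i < β i := by
      by_contra h
      push_neg at h
      exact hle (Finsupp.le_def.2 h)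
    have : ((α i).descFactorial (β i) : ℝ) = 0 := by
      rw [Nat.descFactorial_eq_zero_iff_lt.2 hi]; simp
    rw [Finset.prod_eq_zero (mem_univ i) this]
    ring

/-- Pólya's Theorem: If a real form f of degree d in m variables is
strictly positive on the standard simplex, then for some N all coefficients of
(x₁ + … + x_m)^N · f are strictly positive. -/
theorem stmt_5 (m d : ℕ) (hm : 0 < m) (f : MvPolynomial (Fin m) ℝ)
    (hf : f.IsHomogeneous d)
    (hpos : ∀ x : Fin m → ℝ, (∑ i, x i = 1) → (∀ i, 0 ≤ x i) → 0 < eval x f) :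
    ∃ N : ℕ, ∀ α : Fin m →₀ ℕ, (α.sum fun _ n => n) = N + d →
      0 < ((∑ i, X i : MvPolynomial (Fin m) ℝ) ^ N * f).coeff α := by
  classical
  -- a positive lower bound ε for f on the simplex
  have hne : (stdSimplex ℝ (Fin m)).Nonempty := ⟨fun _ => (m : ℝ)⁻¹, by
    constructor
    · intro i; positivity
    · rw [Finset.sum_const, card_univ, Fintype.card_fin, nsmul_eq_mul]
      field_simp⟩
  obtain ⟨z, hz, hmin⟩ := (isCompact_stdSimplex ℝ (Fin m)).exists_isMinOn hne
    (MvPolynomial.continuous_eval (p := f)).continuousOn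
  set ε : ℝ := eval z f with hε_def
  have hε : 0 < ε := hpos z hz.2 hz.1
  set K : ℝ := ∑ β ∈ f.support, |coeff β f| with hK_def
  have hK : 0 ≤ K := Finset.sum_nonneg fun _ _ => abs_nonneg _
  refine ⟨⌈K * d ^ 2 / ε⌉₊ + 1, ?_⟩
  intro α hαsum
  set N : ℕ := ⌈K * d ^ 2 / ε⌉₊ + 1 with hN_def
  set t : ℕ := N + d with ht_def
  have ht0 : 0 < t := by omega
  have htR : (0 : ℝ) < t := by exact_mod_cast ht0
  have hα : ∑ i, α i = N + d := by
    rw [← ht_def, ← hαsum]; exact (Finsupp.sum_fintype α (fun _ n => n) (fun _ => rfl)).symm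
  -- the simplex point x = α / t
  set x : Fin m → ℝ := fun i => (α i : ℝ) / t with hx_def
  have hxnn : ∀ i, 0 ≤ x i := fun i => by positivity
  have hxsum : ∑ i, x i = 1 := by
    rw [hx_def, ← Finset.sum_div]
    rw [div_eq_one_iff_eq (ne_of_gt htR)]
    exact_mod_cast hα
  have hxmem : x ∈ stdSimplex ℝ (Fin m) := ⟨hxnn, hxsum⟩
  have hfx : ε ≤ eval x f := hmin hxmem
  have hαle : ∀ i, α i ≤ t := by
    intro i
    calc α i ≤ ∑ j, α j := Finset.single_le_sum (fun j _ => Nat.zero_le _) (mem_univ i)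
    _ = t := hα
  -- the approximation bound, per monomial β of f
  have hterm : ∀ β ∈ f.support,
      |(∏ i, ((α i).descFactorial (β i) : ℝ)) / (t : ℝ) ^ d - ∏ i, x i ^ β i|
        ≤ (d : ℝ) ^ 2 / t := by
    intro β hβ
    have hdeg : ∑ i, β i = d := polya_degsum hf hβ
    have hβle : ∀ i, β i ≤ d := by
      intro i
      rw [← hdeg]
      exact Finset.single_le_sum (fun j _ => Nat.zero_le _) (mem_univ i)
    have htd : (t : ℝ) ^ d = ∏ i, (t : ℝ) ^ β i := by
      rw [Finset.prod_pow_eq_pow_sum, hdeg]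
    have hP : (∏ i, ((α i).descFactorial (β i) : ℝ)) / (t : ℝ) ^ d
        = ∏ i, ∏ j ∈ range (β i), (((α i : ℝ) - j) / t) := by
      rw [htd, ← Finset.prod_div_distrib]
      refine Finset.prod_congr rfl fun i _ => ?_
      rw [polya_descFactorial_cast, Finset.prod_div_distrib, Finset.prod_const, card_range]
    have hQ : (∏ i, x i ^ β i) = ∏ i, ∏ j ∈ range (β i), x i := by
      refine Finset.prod_congr rfl fun i _ => ?_
      rw [Finset.prod_const, card_range]
    rw [hP, hQ]
    have hsig : ∀ g : Fin m → ℕ → ℝ,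
        (∏ i, ∏ j ∈ range (β i), g i j)
          = ∏ p ∈ univ.sigma (fun i => range (β i)), g p.1 p.2 := by
      intro g
      rw [Finset.prod_sigma]
    rw [hsig (fun i j => ((α i : ℝ) - j) / t), hsig (fun i _ => x i)]
    have hcard : (univ.sigma (fun i : Fin m => range (β i))).card = d := by
      rw [Finset.card_sigma]
      simp only [card_range]
      exact hdeg
    have hbound := polya_abs_prod_sub_prod (univ.sigma (fun i : Fin m => range (β i)))
      (fun p => ((α p.1 : ℝ) - p.2) / t) (fun p => x p.1)
      (by
        rintro ⟨i, j⟩ hp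
        simp only [Finset.mem_sigma, Finset.mem_range] at hp
        have hj : (j : ℝ) ≤ t := by
          have : j < d := lt_of_lt_of_le hp.2 (hβle i)
          have : j ≤ t := by omega
          exact_mod_cast this
        have hαi : (α i : ℝ) ≤ t := by exact_mod_cast hαle i
        rw [abs_div, abs_of_pos htR, div_le_one htR]
        rw [abs_le]
        constructor
        · have : (0:ℝ) ≤ (α i : ℝ) := by positivity
          linarith
        · have : (0:ℝ) ≤ (j : ℝ) := by positivity
          linarith)
      (by
        rintro ⟨i, j⟩ _
        rw [abs_of_nonneg (hxnn i)]
        rw [hx_def]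
        rw [div_le_one htR]
        exact_mod_cast hαle i)
    refine hbound.trans ?_
    have hterm2 : ∀ p ∈ univ.sigma (fun i : Fin m => range (β i)),
        |((α p.1 : ℝ) - p.2) / t - x p.1| ≤ (d : ℝ) / t := by
      rintro ⟨i, j⟩ hp
      simp only [Finset.mem_sigma, Finset.mem_range] at hp
      have : ((α i : ℝ) - j) / t - x i = -(j / t) := by
        rw [hx_def]; ring
      rw [this, abs_neg, abs_div, abs_of_pos htR]
      have hj : |(j:ℝ)| ≤ d := by
        rw [abs_of_nonneg (by positivity)]
        have : j < d := lt_of_lt_of_le hp.2 (hβle i)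
        exact_mod_cast this.le
      gcongr
    calc ∑ p ∈ univ.sigma (fun i : Fin m => range (β i)),
          |((α p.1 : ℝ) - p.2) / t - x p.1|
        ≤ ∑ p ∈ univ.sigma (fun i : Fin m => range (β i)), (d : ℝ) / t :=
          Finset.sum_le_sum hterm2
      _ = (d : ℝ) ^ 2 / t := by
          rw [Finset.sum_const, hcard, nsmul_eq_mul]
          ring
  -- sum up: S / t^d is close to eval x f
  set S : ℝ := ∑ β ∈ f.support, coeff β f * ∏ i, ((α i).descFactorial (β i) : ℝ) with hS_def
  have hSdiff : |S / (t : ℝ) ^ d - eval x f| ≤ K * d ^ 2 / t := by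
    rw [eval_eq' x f]
    have hSd : S / (t : ℝ) ^ d = ∑ β ∈ f.support,
        coeff β f * ((∏ i, ((α i).descFactorial (β i) : ℝ)) / (t : ℝ) ^ d) := by
      rw [hS_def, Finset.sum_div]
      exact Finset.sum_congr rfl fun β _ => by ring
    rw [hSd, ← Finset.sum_sub_distrib]
    refine (Finset.abs_sum_le_sum_abs _ _).trans ?_
    have : ∀ β ∈ f.support,
        |coeff β f * ((∏ i, ((α i).descFactorial (β i) : ℝ)) / (t : ℝ) ^ d)
          - coeff β f * ∏ i, x i ^ β i|
        ≤ |coeff β f| * ((d : ℝ) ^ 2 / t) := by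
      intro β hβ
      rw [← mul_sub, abs_mul]
      exact mul_le_mul_of_nonneg_left (hterm β hβ) (abs_nonneg _)
    refine (Finset.sum_le_sum this).trans ?_
    rw [← Finset.sum_mul, hK_def]
    rw [div_eq_mul_inv, div_eq_mul_inv]
    ring_nf
    exact le_refl _
  -- choice of N makes the error less than ε
  have hKd : K * d ^ 2 / t < ε := by
    have h1 : K * d ^ 2 / ε < N := by
      have h0 := Nat.le_ceil (K * d ^ 2 / ε)
      have h0' : (⌈K * d ^ 2 / ε⌉₊ : ℝ) < N := by
        rw [hN_def]; exact_mod_cast Nat.lt_succ_self _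
      linarith
    have h2 : (N : ℝ) ≤ t := by
      have : N ≤ t := by omega
      exact_mod_cast this
    have h3 : K * d ^ 2 < ε * t := by
      have := (div_lt_iff₀ hε).1 h1
      nlinarith
    rw [div_lt_iff₀ htR]
    nlinarith
  have hS : 0 < S := by
    have h1 : ε ≤ eval x f := hfx
    have h2 : eval x f - K * d ^ 2 / t ≤ S / (t : ℝ) ^ d := by
      have := abs_le.1 hSdiff
      linarith [this.1]
    have h3 : 0 < S / (t : ℝ) ^ d := by
      have : 0 < ε - K * d ^ 2 / t := by linarith
      linarith
    have htd : (0:ℝ) < (t : ℝ) ^ d := by positivity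
    have h4 := mul_pos h3 htd
    rwa [div_mul_cancel₀ S (ne_of_gt htd)] at h4
  -- conclude via the key identity
  have hid := polya_keyident m N d f hf α hα
  have hPfac : (0:ℝ) < ∏ i, ((Nat.factorial (α i)) : ℝ) := by
    apply Finset.prod_pos
    intro i _
    exact_mod_cast Nat.factorial_pos (α i)
  have hNfac : (0:ℝ) < (Nat.factorial N : ℝ) := by exact_mod_cast Nat.factorial_pos N
  have hrhs : 0 < (Nat.factorial N : ℝ) * S := mul_pos hNfac hS
  rw [← hS_def] at hid
  nlinarith [hid, mul_pos hrhs hPfac]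
end

section
/- If for every permutation θ of {1,…,m} all coefficients of the form f(A_θ x) are strictly positive, where A_θ = P_θ T_m is the WDS matrix, then f(x) > 0 for all x in the standard simplex {x : Σ x_i = 1, x_i ≥ 0}. -/
open MvPolynomial

/-- If for every permutation θ all coefficients of the form f(A_θ x)
are strictly positive, where A_θ = P_θ T_m is the WDS matrix, then f is strictly
positive on the standard simplex. -/
theorem stmt_9 (m d : ℕ) (f : MvPolynomial (Fin m) ℝ) (hf : f.IsHomogeneous d)
    (T : Matrix (Fin m) (Fin m) ℝ)
    (hT : ∀ i j : Fin m, T i j = if i ≤ j then (1 : ℝ) / ((j : ℕ) + 1) else 0)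
    (P : Equiv.Perm (Fin m) → Matrix (Fin m) (Fin m) ℝ)
    (hP : ∀ θ : Equiv.Perm (Fin m), ∀ i j : Fin m,
      P θ i j = if j = θ i then (1 : ℝ) else 0)
    (hc : ∀ θ : Equiv.Perm (Fin m), ∀ α : Fin m →₀ ℕ, (α.sum fun _ n => n) = d →
      0 < (aeval (fun i : Fin m =>
            ∑ j, C ((P θ * T) i j) * X j : Fin m → MvPolynomial (Fin m) ℝ) f).coeff α) :
    ∀ x : Fin m → ℝ, (∑ i, x i = 1) → (∀ i, 0 ≤ x i) → 0 < eval x f := by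
  intro x hx1 hx0
  classical
  set σp : Equiv.Perm (Fin m) := Tuple.sort x with hσp
  have hmono : Monotone (x ∘ σp) := Tuple.monotone_sort x
  set θ : Equiv.Perm (Fin m) := σp⁻¹.trans (Fin.revPerm) with hθdef
  have hθ : ∀ i, θ i = Fin.rev (σp⁻¹ i) := fun i => rfl
  -- extended sorted vector
  set z : ℕ → ℝ := fun j => if h : j < m then x (σp (Fin.rev ⟨j, h⟩)) else 0 with hzdef
  have hz0 : ∀ j, 0 ≤ z j := by
    intro j
    simp only [hzdef]
    split
    · exact hx0 _
    · exact le_refl 0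
  have hzanti : ∀ j j' : ℕ, j ≤ j' → z j' ≤ z j := by
    intro j j' hjj
    by_cases h' : j' < m
    · have h : j < m := lt_of_le_of_lt hjj h'
      simp only [hzdef, dif_pos h, dif_pos h']
      have hrev : Fin.rev (⟨j', h'⟩ : Fin m) ≤ Fin.rev (⟨j, h⟩ : Fin m) :=
        Fin.rev_le_rev.mpr hjj
      exact hmono hrev
    · simp only [hzdef, dif_neg h']
      exact hz0 j
  -- the preimage vector y
  set y : Fin m → ℝ := fun j => (((j : ℕ) : ℝ) + 1) * (z j - z (j + 1)) with hydef
  have hy0 : ∀ j, 0 ≤ y j := by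
    intro j
    apply mul_nonneg
    · positivity
    · have := hzanti (j : ℕ) ((j : ℕ) + 1) (Nat.le_succ _)
      linarith
  -- the matrix entries
  have hA : ∀ i j : Fin m, (P θ * T) i j =
      if θ i ≤ j then (1 : ℝ) / ((j : ℕ) + 1) else 0 := by
    intro i j
    rw [Matrix.mul_apply]
    rw [Finset.sum_eq_single (θ i)]
    · rw [hP, hT, if_pos rfl, one_mul]
    · intro k _ hk
      rw [hP, if_neg hk, zero_mul]
    · intro h
      exact absurd (Finset.mem_univ _) h
  -- x = A y
  have hxA : ∀ i : Fin m, x i = ∑ j, (P θ * T) i j * y j := by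
    intro i
    have step1 : ∀ j : Fin m, (P θ * T) i j * y j =
        if (θ i : ℕ) ≤ (j : ℕ) then z (j : ℕ) - z ((j : ℕ) + 1) else 0 := by
      intro j
      rw [hA, hydef]
      by_cases h : θ i ≤ j
      · rw [if_pos h, if_pos (Fin.le_def.mp h)]
        have hne : ((j : ℕ) : ℝ) + 1 ≠ 0 := by positivity
        field_simp
      · rw [if_neg h, if_neg (fun hc => h (Fin.le_def.mpr hc)), zero_mul]
    rw [Finset.sum_congr rfl (fun j _ => step1 j)]
    rw [Fin.sum_univ_eq_sum_range (fun j => if (θ i : ℕ) ≤ j then z j - z (j + 1) else 0) m]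
    rw [← Finset.sum_filter]
    have hfilter : (Finset.range m).filter (fun j => (θ i : ℕ) ≤ j) =
        Finset.Ico ((θ i : ℕ)) m := by
      ext a
      simp [Finset.mem_filter, Finset.mem_range, Finset.mem_Ico, and_comm]
    rw [hfilter]
    have hle : (θ i : ℕ) ≤ m := le_of_lt (θ i).isLt
    rw [Finset.sum_Ico_eq_sub _ hle, Finset.sum_range_sub' z, Finset.sum_range_sub' z]
    have hzm : z m = 0 := by simp [hzdef]
    have hzθ : z ((θ i : ℕ)) = x i := by
      have hlt : (θ i : ℕ) < m := (θ i).isLt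
      simp only [hzdef, dif_pos hlt]
      congr 1
      have : (⟨(θ i : ℕ), hlt⟩ : Fin m) = θ i := Fin.eta _ _
      rw [this, hθ, Fin.rev_rev]
      exact Equiv.apply_symm_apply σp i
    rw [hzm, hzθ]
    ring
  -- the transformed polynomial
  set subst : Fin m → MvPolynomial (Fin m) ℝ :=
    fun i => ∑ j, C ((P θ * T) i j) * X j with hsubst
  set g : MvPolynomial (Fin m) ℝ := aeval subst f with hgdef
  -- evaluation transfer
  have hevalsubst : ∀ i, eval y (subst i) = x i := by
    intro i
    rw [hsubst]
    simp only [map_sum, eval_mul, eval_C, eval_X]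
    exact (hxA i).symm
  have key : eval x f = eval y g := by
    have h1 : eval y g = eval (fun i => eval y (subst i)) f :=
      eval₂Hom_bind₁ (RingHom.id ℝ) y subst f
    have h2 : (fun i => eval y (subst i)) = x := funext hevalsubst
    rw [h1, h2]
  -- homogeneity of g
  have hgh : g.IsHomogeneous d := by
    have h1 : ∀ i, (subst i).IsHomogeneous 1 := by
      intro i
      exact IsHomogeneous.sum _ _ _ (fun j _ => isHomogeneous_C_mul_X _ _)
    have := hf.aeval subst h1
    rwa [one_mul] at this
  have hsupdeg : ∀ α ∈ g.support, (α.sum fun _ n => n) = d := by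
    intro α hα
    have hcoeff : coeff α g ≠ 0 := mem_support_iff.mp hα
    have := hgh hcoeff
    rw [← this, show (1 : Fin m → ℕ) = fun _ => 1 from rfl, ← Finsupp.degree_eq_weight_one]
    rfl
  -- find a strictly positive coordinate of y
  have hk : ∃ k, 0 < y k := by
    by_contra h
    push_neg at h
    have hy00 : ∀ k, y k = 0 := fun k => le_antisymm (h k) (hy0 k)
    have hx00 : ∀ i, x i = 0 := by
      intro i
      rw [hxA i]
      simp [hy00]
    rw [Finset.sum_congr rfl (fun i _ => hx00 i)] at hx1
    simp at hx1
  obtain ⟨k, hk⟩ := hk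
  -- conclude
  rw [key, eval_eq']
  apply Finset.sum_pos'
  · intro α hα
    apply mul_nonneg (hc θ α (hsupdeg α hα)).le
    exact Finset.prod_nonneg (fun i _ => pow_nonneg (hy0 i) _)
  · refine ⟨Finsupp.single k d, ?_, ?_⟩
    · rw [mem_support_iff]
      have hsum : ((Finsupp.single k d).sum fun _ n => n) = d := by
        simp [Finsupp.sum_single_index]
      exact (hc θ _ hsum).ne'
    · have hsum : ((Finsupp.single k d).sum fun _ n => n) = d := by
        simp [Finsupp.sum_single_index]
      apply mul_pos (hc θ _ hsum)
      have hprod : (∏ i, y i ^ (Finsupp.single k d) i) = y k ^ d := by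
        rw [Finset.prod_eq_single k]
        · simp
        · intro i _ hik
          rw [Finsupp.single_eq_of_ne' (Ne.symm hik), pow_zero]
        · intro h
          exact absurd (Finset.mem_univ _) h
      rw [hprod]
      exact pow_pos hk d
end

section
/- Let 𝐀 ⊆ ℝ^{n×n} be connected, suppose some A ∈ 𝐀 is Hurwitz stable, and suppose no matrix in 𝐀 has an eigenvalue on the imaginary axis (i.e., for all A ∈ 𝐀 and t ∈ ℝ, it is not an eigenvalue of A). Then every matrix in 𝐀 is Hurwitz stable. -/
open Polynomial Matrix Filter Topology
open scoped NNReal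

noncomputable def stmt14P {n : ℕ} (B : Matrix (Fin n) (Fin n) ℝ) : Polynomial ℂ :=
  (B.map (fun x => (x : ℂ))).charpoly

noncomputable def stmt14D {n : ℕ} (B : Matrix (Fin n) (Fin n) ℝ) (z : ℂ) :
    Matrix (Fin n) (Fin n) ℂ :=
  Matrix.of fun i j => (if i = j then z else 0) - (B i j : ℂ)

lemma stmt14_eval {n : ℕ} (B : Matrix (Fin n) (Fin n) ℝ) (z : ℂ) :
    (stmt14P B).eval z = (stmt14D B z).det := by
  have h : (stmt14P B).eval z
      = Polynomial.evalRingHom z ((charmatrix (B.map (fun x => (x : ℂ)))).det) := rfl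
  rw [h, RingHom.map_det]
  congr 1
  ext i j
  by_cases hij : i = j
  · subst hij
    simp [stmt14D, charmatrix_apply_eq, Matrix.map_apply]
  · simp [stmt14D, charmatrix_apply_ne _ _ _ hij, hij, Matrix.map_apply]

lemma stmt14_cont {n : ℕ} :
    Continuous fun p : Matrix (Fin n) (Fin n) ℝ × ℂ => (stmt14P p.1).eval p.2 := by
  simp only [stmt14_eval]
  apply Continuous.matrix_det
  apply continuous_matrix
  intro i j
  have hB : Continuous fun p : Matrix (Fin n) (Fin n) ℝ × ℂ => ((p.1 i j : ℝ) : ℂ) :=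
    Complex.continuous_ofReal.comp
      ((continuous_apply j).comp ((continuous_apply i).comp continuous_fst))
  by_cases hij : i = j
  · simpa only [stmt14D, Matrix.of_apply, if_pos hij, Pi.sub_def] using continuous_snd.sub hB
  · simpa only [stmt14D, Matrix.of_apply, if_neg hij, Pi.sub_def] using continuous_const.sub hB

lemma stmt14_key {n : ℕ} (hn : 0 < n) (B : Matrix (Fin n) (Fin n) ℝ) (z : ℂ) :
    ∃ w : ℂ, (stmt14P B).IsRoot w ∧ ‖z - w‖ ^ n ≤ ‖(stmt14P B).eval z‖ := by
  have hmonic : (stmt14P B).Monic := Matrix.charpoly_monic _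
  have hdeg : (stmt14P B).natDegree = n := by
    unfold stmt14P
    simp
  have hsplit : Splits (stmt14P B) := IsAlgClosed.splits _
  have hcard : Multiset.card (stmt14P B).roots = n := by
    rw [splits_iff_card_roots.mp hsplit, hdeg]
  have hne : (stmt14P B).roots.toFinset.Nonempty := by
    rw [Multiset.toFinset_nonempty]
    intro h0
    rw [h0] at hcard
    simp at hcard
    omega
  obtain ⟨w, hw, hmin⟩ :=
    (stmt14P B).roots.toFinset.exists_min_image (fun a => ‖z - a‖₊) hne
  refine ⟨w, isRoot_of_mem_roots (Multiset.mem_toFinset.mp hw), ?_⟩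
  have heval : (stmt14P B).eval z = ((stmt14P B).roots.map (fun a => z - a)).prod := by
    conv_lhs => rw [hsplit.eq_prod_roots_of_monic hmonic]
    rw [eval_multiset_prod, Multiset.map_map]
    simp
  have hnn : ‖(stmt14P B).eval z‖₊ = ((stmt14P B).roots.map (fun a => ‖z - a‖₊)).prod := by
    rw [heval]
    have h1 := Multiset.prod_hom (Multiset.map (fun a => z - a) (stmt14P B).roots)
      ((nnnormHom : ℂ →*₀ ℝ≥0).toMonoidHom)
    rw [show ((⇑((nnnormHom : ℂ →*₀ ℝ≥0).toMonoidHom) : ℂ → ℝ≥0)) = fun x : ℂ => ‖x‖₊ from rfl]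
      at h1
    simp only [Multiset.map_map] at h1
    exact h1.symm
  have hb : ‖z - w‖₊ ^ n ≤ ((stmt14P B).roots.map (fun a => ‖z - a‖₊)).prod := by
    have hc : Multiset.card ((stmt14P B).roots.map (fun a => ‖z - a‖₊)) = n := by
      rw [Multiset.card_map, hcard]
    have h2 : ‖z - w‖₊ ^ Multiset.card (Multiset.map (fun a => ‖z - a‖₊) (stmt14P B).roots)
        ≤ ((stmt14P B).roots.map (fun a => ‖z - a‖₊)).prod := by
      apply Multiset.pow_card_le_prod
      intro x hx
      obtain ⟨a, ha, rfl⟩ := Multiset.mem_map.mp hx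
      exact hmin a (Multiset.mem_toFinset.mpr ha)
    rwa [hc] at h2
  have := hnn ▸ hb
  exact_mod_cast this

lemma stmt14_bound {n : ℕ} (B : Matrix (Fin n) (Fin n) ℝ) (z : ℂ)
    (hz : (stmt14P B).IsRoot z) : ‖z‖ ≤ ∑ i, ∑ j, |B i j| := by
  have hdet : (stmt14D B z).det = 0 := by rw [← stmt14_eval]; exact hz
  obtain ⟨v, hv0, hv⟩ := (Matrix.exists_mulVec_eq_zero_iff).mpr hdet
  set M := B.map (fun x => (x : ℂ)) with hM
  have hDe : stmt14D B z = z • (1 : Matrix (Fin n) (Fin n) ℂ) - M := by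
    ext i j
    by_cases hij : i = j <;>
      simp [stmt14D, hM, Matrix.one_apply, hij, Matrix.map_apply]
  have hMv : M.mulVec v = z • v := by
    rw [hDe, Matrix.sub_mulVec, Matrix.smul_mulVec, Matrix.one_mulVec,
      sub_eq_zero] at hv
    exact hv.symm
  have heig : Module.End.HasEigenvalue (Matrix.toLin' M) z :=
    Module.End.hasEigenvalue_of_hasEigenvector
      ⟨Module.End.mem_eigenspace_iff.mpr (by rw [Matrix.toLin'_apply, hMv]), hv0⟩
  obtain ⟨k, hk⟩ := eigenvalue_mem_ball heig
  have h1 : ‖z‖ ≤ ‖M k k‖ + ∑ j ∈ Finset.univ.erase k, ‖M k j‖ := by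
    have hd : dist z (M k k) ≤ ∑ j ∈ Finset.univ.erase k, ‖M k j‖ :=
      Metric.mem_closedBall.mp hk
    calc ‖z‖ = ‖M k k + (z - M k k)‖ := by ring_nf
      _ ≤ ‖M k k‖ + ‖z - M k k‖ := norm_add_le _ _
      _ ≤ ‖M k k‖ + ∑ j ∈ Finset.univ.erase k, ‖M k j‖ := by
          rw [← dist_eq_norm]; linarith
  have h2 : ‖M k k‖ + ∑ j ∈ Finset.univ.erase k, ‖M k j‖ = ∑ j, ‖M k j‖ :=
    Finset.add_sum_erase _ (fun j => ‖M k j‖) (Finset.mem_univ k)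
  have h3 : ∑ j, ‖M k j‖ = ∑ j, |B k j| := by
    simp [hM, Matrix.map_apply, Complex.norm_real, Real.norm_eq_abs]
  have h4 : ∑ j, |B k j| ≤ ∑ i, ∑ j, |B i j| :=
    Finset.single_le_sum (f := fun i => ∑ j, |B i j|)
      (fun i _ => Finset.sum_nonneg fun j _ => abs_nonneg _) (Finset.mem_univ k)
  linarith

lemma stmt14_closed1 {n : ℕ} (hn : 0 < n) :
    IsClosed {B : Matrix (Fin n) (Fin n) ℝ | ∀ z, (stmt14P B).IsRoot z → z.re ≤ 0} := by
  apply isClosed_of_closure_subset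
  intro A hA z hz
  by_contra hpos
  push_neg at hpos
  have hc : Continuous fun B : Matrix (Fin n) (Fin n) ℝ => (stmt14P B).eval z :=
    stmt14_cont.comp (continuous_id.prodMk continuous_const)
  have h0 : (stmt14P A).eval z = 0 := hz
  have hev : ∀ᶠ B in 𝓝 A, ‖(stmt14P B).eval z‖ < z.re ^ n := by
    have ht : Tendsto (fun B : Matrix (Fin n) (Fin n) ℝ => ‖(stmt14P B).eval z‖)
        (𝓝 A) (𝓝 0) := by
      simpa [h0] using (hc.tendsto A).norm
    exact ht.eventually_lt_const (by positivity)
  obtain ⟨B, hBmem, hBset⟩ := mem_closure_iff_nhds.mp hA _ hev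
  obtain ⟨w, hw, hle⟩ := stmt14_key hn B z
  have hwre : w.re ≤ 0 := hBset w hw
  have hlt : ‖z - w‖ ^ n < z.re ^ n := lt_of_le_of_lt hle hBmem
  have hzw : ‖z - w‖ < z.re := by
    have := pow_lt_pow_iff_left₀ (norm_nonneg (z - w)) hpos.le hn.ne'
    exact this.mp hlt
  have hre : z.re - w.re ≤ ‖z - w‖ := by
    have h1 : |(z - w).re| ≤ ‖z - w‖ := Complex.abs_re_le_norm _
    have h2 : (z - w).re = z.re - w.re := by simp
    rw [h2] at h1
    exact (le_abs_self _).trans h1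
  linarith

lemma stmt14_closed2 {n : ℕ} :
    IsClosed {B : Matrix (Fin n) (Fin n) ℝ | ∃ z, (stmt14P B).IsRoot z ∧ 0 ≤ z.re} := by
  haveI : SequentialSpace (Matrix (Fin n) (Fin n) ℝ) :=
    inferInstanceAs (SequentialSpace (Fin n → Fin n → ℝ))
  apply IsSeqClosed.isClosed
  intro x A hx hlim
  choose zf hz1 hz2 using hx
  have hgc : Continuous fun B : Matrix (Fin n) (Fin n) ℝ => ∑ i, ∑ j, |B i j| := by
    apply continuous_finset_sum
    intro i _
    apply continuous_finset_sum
    intro j _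
    exact ((continuous_apply j).comp (continuous_apply i)).abs
  have hgt : Tendsto (fun m => ∑ i, ∑ j, |x m i j|) atTop
      (𝓝 (∑ i, ∑ j, |A i j|)) := (hgc.tendsto A).comp hlim
  obtain ⟨R, hR⟩ := hgt.bddAbove_range
  have hzb : ∀ m, zf m ∈ Metric.closedBall (0 : ℂ) R := fun m => by
    rw [Metric.mem_closedBall, dist_zero_right]
    exact (stmt14_bound (x m) (zf m) (hz1 m)).trans (hR ⟨m, rfl⟩)
  obtain ⟨z, -, φ, hφ, hzl⟩ :=
    tendsto_subseq_of_bounded (Metric.isBounded_closedBall (x := (0 : ℂ)) (r := R)) hzb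
  have h1 : Tendsto (fun m => (x (φ m), zf (φ m))) atTop (𝓝 (A, z)) :=
    (hlim.comp hφ.tendsto_atTop).prodMk_nhds hzl
  have h2 : Tendsto (fun m => (stmt14P (x (φ m))).eval (zf (φ m))) atTop
      (𝓝 ((stmt14P A).eval z)) := (stmt14_cont.tendsto (A, z)).comp h1
  have h3 : (stmt14P A).eval z = 0 := by
    have hc : ∀ m, (stmt14P (x (φ m))).eval (zf (φ m)) = 0 := fun m => hz1 _
    exact tendsto_nhds_unique h2 (by simpa [hc] using (tendsto_const_nhds :
      Tendsto (fun _ : ℕ => (0 : ℂ)) atTop (𝓝 0)))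
  have h4 : 0 ≤ z.re := by
    have ht : Tendsto (fun m => (zf (φ m)).re) atTop (𝓝 z.re) :=
      (Complex.continuous_re.tendsto z).comp hzl
    exact ge_of_tendsto' ht (fun m => hz2 (φ m)) |>.trans_eq rfl
  exact ⟨z, h3, h4⟩

/-- Let AA ⊆ ℝ^{n×n} be connected, suppose some A ∈ AA is Hurwitz
stable, and suppose no matrix in AA has an eigenvalue on the imaginary axis.
Then every matrix in AA is Hurwitz stable. -/
theorem stmt_14 (n : ℕ) (AA : Set (Matrix (Fin n) (Fin n) ℝ))
    (hconn : IsConnected AA)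
    (hstab : ∃ A ∈ AA, ∀ z : ℂ,
      ((A.map (fun x => (x : ℂ))).charpoly).IsRoot z → z.re < 0)
    (himag : ∀ A ∈ AA, ∀ t : ℝ,
      ¬ ((A.map (fun x => (x : ℂ))).charpoly).IsRoot (t * Complex.I)) :
    ∀ A ∈ AA, ∀ z : ℂ, ((A.map (fun x => (x : ℂ))).charpoly).IsRoot z → z.re < 0 := by
  rcases Nat.eq_zero_or_pos n with hn | hn
  · subst hn
    intro A _ z hz
    exfalso
    have h1 : (A.map (fun x => (x : ℂ))).charpoly = 1 := by
      rw [Matrix.charpoly]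
      exact Matrix.det_isEmpty
    rw [h1] at hz
    simpa using hz
  · obtain ⟨A₀, hA₀, hA₀s⟩ := hstab
    intro A hA z hz
    by_contra hzpos
    have hzre : 0 ≤ z.re := not_lt.mp hzpos
    have hA2 : A ∈ {B : Matrix (Fin n) (Fin n) ℝ | ∃ w, (stmt14P B).IsRoot w ∧ 0 ≤ w.re} :=
      ⟨z, hz, hzre⟩
    have hA1 : A₀ ∈ {B : Matrix (Fin n) (Fin n) ℝ | ∀ w, (stmt14P B).IsRoot w → w.re ≤ 0} :=
      fun w hw => (hA₀s w hw).le
    have hcover : AA ⊆ {B : Matrix (Fin n) (Fin n) ℝ | ∀ w, (stmt14P B).IsRoot w → w.re ≤ 0}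
        ∪ {B | ∃ w, (stmt14P B).IsRoot w ∧ 0 ≤ w.re} := by
      intro B _
      by_cases hB : ∃ w, (stmt14P B).IsRoot w ∧ 0 ≤ w.re
      · exact Or.inr hB
      · push_neg at hB
        exact Or.inl fun w hw => (hB w hw).le
    obtain ⟨C, hCA, hC1, hC2⟩ := isPreconnected_closed_iff.mp hconn.isPreconnected _ _
      (stmt14_closed1 hn) stmt14_closed2 hcover ⟨A₀, hA₀, hA1⟩ ⟨A, hA, hA2⟩
    obtain ⟨w, hw, hw0⟩ := hC2
    have hw1 : w.re ≤ 0 := hC1 w hw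
    have hwre : w.re = 0 := le_antisymm hw1 hw0
    have hwI : w = (w.im : ℝ) * Complex.I := by
      apply Complex.ext <;> simp [hwre]
    exact himag C hCA w.im (hwI ▸ hw)
end
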